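/- arXiv:2003.09364 — 4 statements merged into one kernel-verified Lean document; each statement's English description precedes it below -/
import Mathlib

section
/- With V and its Kleene star V* as above, for all α₁, …, αₙ ∈ Dom(O_V) we have O_{V*}(α₁α₂⋯αₙ) = O_V(α₁) ⊙ O_V(α₂) ⊙ ⋯ ⊙ O_V(αₙ), where ⊙ is the product-monoid operation on Ω* × M (concatenation in the first coordinate and the monoid multiplication in the second). -/
open scoped NNReal Computability
open Classical

noncomputable section

/-- The free monoid structure on lists (concatenation). -/
instance listMonoid (Ω : Type) : Monoid (List Ω) where
  mul := (· ++ ·)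
  one := []
  mul_assoc := List.append_assoc
  one_mul := fun _ => rfl
  mul_one := List.append_nil

/-- A subsequential transducer.  `step q a = some (q', m)` encodes that both the
transition function `δ q a = q'` and the output function `λ q a = m` are defined
(they have equal domains).  `rho q = some r` encodes that `q` is final with final
output `r`. -/
structure Transducer (A Q M : Type) [Monoid M] where
  start : Q
  step : Q → A → Option (Q × M)
  init : M
  rho : Q → Option M

namespace Transducer

variable {A Q M : Type} [Monoid M]

def delta (T : Transducer A Q M) (q : Q) (a : A) : Option Q := (T.step q a).map Prod.fst

def lam (T : Transducer A Q M) (q : Q) (a : A) : Option M := (T.step q a).map Prod.snd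

/-- Generalized (partial) transition function `δ*`. -/
def dstar (T : Transducer A Q M) : Q → List A → Option Q
  | q, [] => some q
  | q, a :: w => (T.delta q a).bind fun q' => T.dstar q' w

/-- Generalized (partial) output function `λ*`. -/
def lstar (T : Transducer A Q M) : Q → List A → Option M
  | _, [] => some 1
  | q, a :: w => (T.step q a).bind fun x => (T.lstar x.1 w).map fun m => x.2 * m

/-- `O_T^q(α)`, defined iff `δ*(q,α)` is a final state. -/
def O (T : Transducer A Q M) (q : Q) (α : List A) : Option M :=
  (T.dstar q α).bind fun p => (T.lstar q α).bind fun m => (T.rho p).map fun r => m * r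

/-- The function `O_T` represented by the transducer. -/
def Ofull (T : Transducer A Q M) (α : List A) : Option M :=
  (T.O T.start α).map fun m => T.init * m

end Transducer

/-- A subsequential failure transducer: a transducer together with a partial failure
transition function and failure output function (of equal domains, encoded by
`failStep`). -/
structure FailTransducer (A Q M : Type) [Monoid M] extends Transducer A Q M where
  failStep : Q → Option (Q × M)

namespace FailTransducer

variable {A Q M : Type} [Monoid M]

def fail (T : FailTransducer A Q M) (q : Q) : Option Q := (T.failStep q).map Prod.fst

def phi (T : FailTransducer A Q M) (q : Q) : Option M := (T.failStep q).map Prod.snd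

/-- The completed transition/output functions `δ_f`, `λ_f`, as the smallest relation
closed under the two defining clauses. `DF T q a q' m` means `δ_f(q,a) = q'` and
`λ_f(q,a) = m`. -/
inductive DF (T : FailTransducer A Q M) : Q → A → Q → M → Prop
  | base {q : Q} {a : A} {q' : Q} {m : M} :
      T.step q a = some (q', m) → DF T q a q' m
  | fail {q : Q} {a : A} {p : Q} {mf : M} {q' : Q} {m : M} :
      T.step q a = none → T.failStep q = some (p, mf) → DF T p a q' m →
      DF T q a q' (mf * m)

/-- Word extension of the completed transition and output functions. -/
inductive DFStar (T : FailTransducer A Q M) : Q → List A → Q → M → Prop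
  | nil {q : Q} : DFStar T q [] q 1
  | cons {q : Q} {a : A} {w : List A} {q' : Q} {m : M} {q'' : Q} {m' : M} :
      DF T q a q' m → DFStar T q' w q'' m' → DFStar T q (a :: w) q'' (m * m')

/-- `ORel T q α m` holds iff `O_T^q(α)` is defined and equal to `m`. -/
def ORel (T : FailTransducer A Q M) (q : Q) (α : List A) (m : M) : Prop :=
  ∃ p m' r, DFStar T q α p m' ∧ T.rho p = some r ∧ m = m' * r

/-- `OFullRel T α m` holds iff `O_T(α)` is defined and equal to `m`. -/
def OFullRel (T : FailTransducer A Q M) (α : List A) (m : M) : Prop :=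
  ∃ m', T.ORel T.start α m' ∧ m = T.init * m'

/-- The completed transition/output as a partial function (noncomputable). -/
def dfFun (T : FailTransducer A Q M) (q : Q) (a : A) : Option (Q × M) :=
  if h : ∃ x : Q × M, DF T q a x.1 x.2 then some h.choose else none

/-- Word extension of the completed transition/output as a partial function. -/
def dfStarFun (T : FailTransducer A Q M) (q : Q) (α : List A) : Option (Q × M) :=
  if h : ∃ x : Q × M, DFStar T q α x.1 x.2 then some h.choose else none

/-- `O_T^q` as a partial function. -/
def Ofun (T : FailTransducer A Q M) (q : Q) (α : List A) : Option M :=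
  if h : ∃ m, T.ORel q α m then some h.choose else none

/-- `O_T` as a partial function. -/
def OfullFun (T : FailTransducer A Q M) (α : List A) : Option M :=
  (T.Ofun T.start α).map fun m => T.init * m

/-- A failure transducer is monotonic if failure transitions preserve finality and
enabled input symbols. -/
def Monotonic (T : FailTransducer A Q M) : Prop :=
  ∀ q p, T.fail q = some p →
    ((T.rho q).isSome → (T.rho p).isSome) ∧
    ∀ a, (T.delta q a).isSome → (T.delta p a).isSome

/-- `n`-fold iteration of the failure transition function. -/
def failIter (T : FailTransducer A Q M) : ℕ → Q → Option Q
  | 0, q => some q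
  | n + 1, q => (T.fail q).bind (T.failIter n)

/-- No state lies on a failure cycle. -/
def NoFailCycles (T : FailTransducer A Q M) : Prop :=
  ∀ q n, 0 < n → T.failIter n q ≠ some q

/-- A failure transducer over `ℝ≥0` is probabilistic if the function it represents
is a probability distribution over `Σ*`. -/
def Probabilistic (F : FailTransducer A Q ℝ≥0) : Prop :=
  ∑' α : List A, ((F.OfullFun α).getD 0) = 1

end FailTransducer

/-- The composition `T ∘ F` of a transducer `T` with outputs in `Ω* × M` with a
failure transducer `F` over `Ω` (Definition 4). -/
def compStep {A Ω Q₁ Q₂ M : Type} [CommMonoid M] (T : Transducer A Q₁ (List Ω × M))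
    (F : FailTransducer Ω Q₂ M) (p : Q₁ × Q₂) (a : A) : Option ((Q₁ × Q₂) × M) :=
  (T.step p.1 a).bind fun x =>
    match x.2.1 with
    | [] => some ((x.1, p.2), x.2.2)
    | ω :: _ =>
      if (F.delta p.2 ω).isSome then
        (F.dfStarFun p.2 x.2.1).map fun y => ((x.1, y.1), x.2.2 * y.2)
      else none

def comp {A Ω Q₁ Q₂ M : Type} [CommMonoid M] (T : Transducer A Q₁ (List Ω × M))
    (F : FailTransducer Ω Q₂ M) : FailTransducer A (Q₁ × Q₂) M where
  start := (T.start, ((F.dfStarFun F.start T.init.1).map Prod.fst).getD F.start)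
  step := compStep T F
  init := T.init.2 * F.init * ((F.dfStarFun F.start T.init.1).map Prod.snd).getD 1
  rho := fun p => (T.rho p.1).bind fun x =>
    (F.dfStarFun p.2 x.1).bind fun y => (F.rho y.1).map fun r => x.2 * y.2 * r
  failStep := fun p => (F.failStep p.2).map fun y => ((p.1, y.1), y.2)

/-- The Kleene star of a transducer `V` (Definition 16): transitions entering a final
state are redirected to the initial state, which becomes the unique final state with
trivial final output; the initial output becomes trivial. -/
def kstar {A Q N : Type} [Monoid N] (V : Transducer A Q N) : Transducer A Q N where
  start := V.start
  step := fun p a => (V.step p a).map fun x =>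
    ((if (V.rho x.1).isSome then V.start else x.1), x.2)
  init := 1
  rho := fun q => if q = V.start then some 1 else none

/-- `O_T(α ∣ β)` for a transducer with outputs in `Ω* × ℝ≥0`. -/
def condVal {A Ω Q : Type} (T : Transducer A Q (List Ω × ℝ≥0)) (β : List Ω)
    (α : List A) : ℝ≥0 :=
  match T.Ofull α with
  | some x => if x.1 = β then x.2 else 0
  | none => 0

/-- A conditional probabilistic transducer: for every `β` in the first projection of
the range of `O_T`, the conditional outputs `O_T(· ∣ β)` sum to `1`. -/
def CondProb {A Ω Q : Type} (T : Transducer A Q (List Ω × ℝ≥0)) : Prop :=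
  ∀ β : List Ω, (∃ α x, T.Ofull α = some x ∧ x.1 = β) →
    ∑' α : List A, condVal T β α = 1

/-!
Final states of `V` have no outgoing transitions, so on a word `α ∈ Dom(O_V)` the star `V*`
follows the run of `V` and is redirected only at the last letter, back to `s₁`. Hence `V*`
loops at `s₁` on each `αᵢ`, emitting `λ*(s₁, αᵢ)`, which is `O_V(αᵢ)` because the initial and
final outputs of `V` are trivial; the outputs of consecutive loops multiply.
-/

namespace Transducer

variable {A Q N : Type} [Monoid N] (T : Transducer A Q N)

theorem dstar_append (q : Q) (u v : List A) :
    T.dstar q (u ++ v) = (T.dstar q u).bind fun p => T.dstar p v := by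
  induction u generalizing q with
  | nil => rfl
  | cons a u ih =>
    simp only [List.cons_append, dstar, ih, Option.bind_assoc]

theorem lstar_append {q p : Q} {u : List A} (hu : T.dstar q u = some p) (v : List A) :
    T.lstar q (u ++ v) = (T.lstar q u).bind fun m => (T.lstar p v).map (m * ·) := by
  induction u generalizing q with
  | nil =>
    cases hu
    simp [lstar]
  | cons a u ih =>
    cases hs : T.step q a with
    | none => simp [dstar, delta, hs] at hu
    | some x =>
      simp only [dstar, delta, hs, Option.map_some, Option.bind_some] at hu
      simp only [List.cons_append, lstar, hs, Option.bind_some, ih hu]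
      cases T.lstar x.1 u <;> cases T.lstar p v <;> simp [mul_assoc]

theorem dstar_lstar_flatten_of_loop {q : Q} (f : List A → N) (L : List (List A))
    (hL : ∀ w ∈ L, T.dstar q w = some q ∧ T.lstar q w = some (f w)) :
    T.dstar q L.flatten = some q ∧ T.lstar q L.flatten = some (L.map f).prod := by
  induction L with
  | nil => exact ⟨rfl, rfl⟩
  | cons w L ih =>
    obtain ⟨hd, hl⟩ := hL w List.mem_cons_self
    obtain ⟨ihd, ihl⟩ := ih fun u hu => hL u (List.mem_cons_of_mem w hu)
    rw [List.flatten_cons, dstar_append, hd, Option.bind_some, ihd, lstar_append T hd, hl,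
      Option.bind_some, ihl, List.map_cons, List.prod_cons]
    exact ⟨rfl, rfl⟩

end Transducer

section KleeneStar

variable {A Q N : Type} [Monoid N] (V : Transducer A Q N)

theorem kstar_step (p : Q) (a : A) :
    (kstar V).step p a = (V.step p a).map fun x =>
      ((if (V.rho x.1).isSome then V.start else x.1), x.2) := rfl

theorem kstar_delta (p : Q) (a : A) :
    (kstar V).delta p a = (V.delta p a).map fun q => if (V.rho q).isSome then V.start else q := by
  simp only [Transducer.delta, kstar_step, Option.map_map]
  rfl

theorem rho_eq_none_of_isSome_delta (hnoout : ∀ q a, (V.rho q).isSome → V.delta q a = none)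
    {q : Q} {a : A} (h : (V.delta q a).isSome) : V.rho q = none := by
  by_contra hr
  simp [hnoout q a (Option.ne_none_iff_isSome.mp hr)] at h

theorem kstar_dstar_cons (hnoout : ∀ q a, (V.rho q).isSome → V.delta q a = none)
    {q p : Q} (a : A) (w : List A) (hw : V.dstar q (a :: w) = some p) :
    (kstar V).dstar q (a :: w) = some (if (V.rho p).isSome then V.start else p) := by
  induction w generalizing q a with
  | nil =>
    simp_all [Transducer.dstar, kstar_delta]
  | cons b w ih =>
    obtain ⟨q', hq', hw⟩ := Option.bind_eq_some_iff.mp hw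
    have hb : (V.delta q' b).isSome := by
      obtain ⟨q'', hq'', -⟩ := Option.bind_eq_some_iff.mp hw
      simp [hq'']
    rw [Transducer.dstar, kstar_delta, hq', Option.map_some, Option.bind_some,
      rho_eq_none_of_isSome_delta V hnoout hb]
    exact ih b hw

theorem kstar_lstar (hnoout : ∀ q a, (V.rho q).isSome → V.delta q a = none)
    {q : Q} {w : List A} {m : N} (hw : V.lstar q w = some m) :
    (kstar V).lstar q w = some m := by
  induction w generalizing q m with
  | nil => exact hw
  | cons a w ih =>
    obtain ⟨x, hx, hw⟩ := Option.bind_eq_some_iff.mp hw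
    obtain ⟨m', hm', rfl⟩ := Option.map_eq_some_iff.mp hw
    rw [Transducer.lstar, kstar_step, hx, Option.map_some, Option.bind_some]
    cases w with
    | nil =>
      cases hm'
      rfl
    | cons b w =>
      have hb : (V.delta x.1 b).isSome := by
        obtain ⟨y, hy, -⟩ := Option.bind_eq_some_iff.mp hm'
        simp [Transducer.delta, hy]
      simp [rho_eq_none_of_isSome_delta V hnoout hb, ih hm']

theorem kstar_ofull_of_loop_start {α : List A} {m : N}
    (hd : (kstar V).dstar V.start α = some V.start) (hl : (kstar V).lstar V.start α = some m) :
    (kstar V).Ofull α = some m := by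
  change ((kstar V).O V.start α).map (1 * ·) = some m
  have hρ : (kstar V).rho V.start = some 1 := if_pos rfl
  simp [Transducer.O, hd, hl, hρ]

theorem kstar_loop_start_of_ofull (hnoout : ∀ q a, (V.rho q).isSome → V.delta q a = none)
    (hinit : V.init = 1) (hrho1 : ∀ q m, V.rho q = some m → m = 1) {w : List A} {y : N}
    (hw : V.Ofull w = some y) :
    (kstar V).dstar V.start w = some V.start ∧ (kstar V).lstar V.start w = some y := by
  obtain ⟨z, hz, rfl⟩ := Option.map_eq_some_iff.mp hw
  obtain ⟨p, hp, hz⟩ := Option.bind_eq_some_iff.mp hz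
  obtain ⟨m, hm, hz⟩ := Option.bind_eq_some_iff.mp hz
  obtain ⟨r, hr, rfl⟩ := Option.map_eq_some_iff.mp hz
  rw [hinit, hrho1 p r hr, one_mul, mul_one]
  refine ⟨?_, kstar_lstar V hnoout hm⟩
  cases w with
  | nil => rfl
  | cons a w => simp [kstar_dstar_cons V hnoout a w hp, hr]

end KleeneStar

theorem stmt11_general {A Ω Q M : Type} [CommMonoid M] (V : Transducer A Q (List Ω × M))
    (hnoout : ∀ q a, (V.rho q).isSome → V.delta q a = none)
    (hinit : V.init = 1)
    (hrho1 : ∀ q m, V.rho q = some m → m = 1) :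
    ∀ L : List (List A), (∀ w ∈ L, (V.Ofull w).isSome) →
      (kstar V).Ofull L.flatten = some ((L.map fun w => (V.Ofull w).getD 1).prod) := by
  intro L hL
  have hloop : ∀ w ∈ L, (kstar V).dstar V.start w = some V.start ∧
      (kstar V).lstar V.start w = some ((V.Ofull w).getD 1) := by
    intro w hw
    obtain ⟨y, hy⟩ := Option.isSome_iff_exists.mp (hL w hw)
    rw [hy, Option.getD_some]
    exact kstar_loop_start_of_ofull V hnoout hinit hrho1 hy
  obtain ⟨hd, hl⟩ := (kstar V).dstar_lstar_flatten_of_loop _ L hloop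
  exact kstar_ofull_of_loop_start V hd hl

/-- `O_{V*}` is multiplicative over concatenations of words from
`Dom(O_V)`. -/
theorem stmt11 {A Ω Q M : Type} [CommMonoid M] (V : Transducer A Q (List Ω × M))
    (hpf : ∀ α γ, (V.Ofull α).isSome → (V.Ofull (α ++ γ)).isSome → γ = [])
    (hnoin : ∀ p a, V.delta p a ≠ some V.start)
    (hnoout : ∀ q a, (V.rho q).isSome → V.delta q a = none)
    (hsnf : V.rho V.start = none)
    (hinit : V.init = 1)
    (hrho1 : ∀ q m, V.rho q = some m → m = 1) :
    ∀ L : List (List A), (∀ w ∈ L, (V.Ofull w).isSome) →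
      (kstar V).Ofull L.flatten = some ((L.map fun w => (V.Ofull w).getD 1).prod) :=
  stmt11_general V hnoout hinit hrho1
end
end

section
/- Let F be a monotonic failure transducer over Ω and V a transducer satisfying the Kleene-star preconditions with Proj₁(Rng(λ₁)) ⊆ Ω ∪ {ε} and all final outputs of V* having first projection ε. Then the composition V* ∘ F is a monotonic failure transducer. -/
open scoped NNReal Computability
open Classical

/-!
Failure transitions of `T ∘ F` move only the `F`-component. When every final output of `T` has
empty first projection, a composite state is final iff both components are, so finality passes
along failure transitions of `F`. When every output of `T` has at most one symbol, a composite
transition on `a` is enabled iff `T` reads `a` and `F` has a direct transition on the emitted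
symbol (if any), a condition that monotonicity of `F` also carries along failure transitions.
For `T = V*` both conditions hold: final outputs of `V*` are trivial and its outputs are those
of `V`.
-/

namespace FailTransducer

variable {A Q M : Type} [Monoid M]

lemma DFStar.eq_of_nil {F : FailTransducer A Q M} {q q' : Q} {m : M}
    (h : F.DFStar q [] q' m) : q' = q ∧ m = 1 := by
  cases h
  exact ⟨rfl, rfl⟩

variable (F : FailTransducer A Q M)

lemma dfStarFun_nil (q : Q) : F.dfStarFun q [] = some (q, 1) := by
  have hex : ∃ x : Q × M, F.DFStar q [] x.1 x.2 := ⟨(q, 1), .nil⟩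
  obtain ⟨hq, hm⟩ := hex.choose_spec.eq_of_nil
  rw [dfStarFun, dif_pos hex]
  exact congrArg some (Prod.ext hq hm)

lemma dfStarFun_singleton_isSome {q : Q} {a : A} (h : (F.delta q a).isSome) :
    (F.dfStarFun q [a]).isSome := by
  obtain ⟨⟨q', m⟩, hstep⟩ := Option.isSome_iff_exists.mp (Option.isSome_map.symm.trans h)
  have hex : ∃ x : Q × M, F.DFStar q [a] x.1 x.2 := ⟨(q', m * 1), .cons (.base hstep) .nil⟩
  simp [dfStarFun, hex]

end FailTransducer

section comp

variable {A Ω Q₁ Q₂ M : Type} [CommMonoid M] (T : Transducer A Q₁ (List Ω × M))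
  (F : FailTransducer Ω Q₂ M)

lemma comp_fail_eq_some_iff {q p : Q₁ × Q₂} :
    (comp T F).fail q = some p ↔ p.1 = q.1 ∧ F.fail q.2 = some p.2 := by
  obtain ⟨q₁, q₂⟩ := q
  obtain ⟨p₁, p₂⟩ := p
  simp [FailTransducer.fail, comp, eq_comm, and_comm]

lemma comp_rho_isSome_iff (hρ : ∀ q x, T.rho q = some x → x.1 = []) (q : Q₁ × Q₂) :
    ((comp T F).rho q).isSome ↔ (T.rho q.1).isSome ∧ (F.rho q.2).isSome := by
  simp only [comp]
  cases h : T.rho q.1 with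
  | none => simp
  | some x => simp [hρ _ _ h, F.dfStarFun_nil]

lemma comp_delta_isSome_iff
    (hlen : ∀ p a q β o, T.step p a = some (q, (β, o)) → β.length ≤ 1) (q : Q₁ × Q₂) (a : A) :
    ((comp T F).delta q a).isSome ↔
      ∃ x, T.step q.1 a = some x ∧ ∀ ω ∈ x.2.1, (F.delta q.2 ω).isSome := by
  simp only [Transducer.delta, comp, compStep, Option.isSome_map]
  cases h : T.step q.1 a with
  | none => simp
  | some x =>
    obtain ⟨q', β, o⟩ := x
    match β, hlen _ _ _ _ _ h with
    | [], _ => simp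
    | [ω], _ =>
      have hsome := F.dfStarFun_singleton_isSome (q := q.2) (a := ω)
      simp only [Transducer.delta, Option.isSome_map] at hsome
      by_cases hω : (F.step q.2 ω).isSome <;> simp [hω, hsome]

theorem comp_monotonic (hρ : ∀ q x, T.rho q = some x → x.1 = [])
    (hlen : ∀ p a q β o, T.step p a = some (q, (β, o)) → β.length ≤ 1) (hF : F.Monotonic) :
    (comp T F).Monotonic := by
  rintro ⟨q₁, q₂⟩ ⟨p₁, p₂⟩ hfail
  obtain ⟨rfl, hfail₂⟩ := (comp_fail_eq_some_iff T F).mp hfail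
  obtain ⟨hFρ, hFδ⟩ := hF q₂ p₂ hfail₂
  refine ⟨?_, fun a => ?_⟩
  · simp only [comp_rho_isSome_iff T F hρ]
    exact And.imp_right hFρ
  · simp only [comp_delta_isSome_iff T F hlen]
    exact Exists.imp fun x => And.imp_right fun h ω hω => hFδ ω (h ω hω)

end comp

section kstar

variable {A Q N : Type} [Monoid N] {V : Transducer A Q N}

lemma kstar_step_eq_some {p q : Q} {a : A} {n : N} (h : (kstar V).step p a = some (q, n)) :
    ∃ q', V.step p a = some (q', n) := by
  obtain ⟨⟨q', n'⟩, hstep, heq⟩ := Option.map_eq_some_iff.mp h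
  obtain ⟨-, rfl⟩ := Prod.mk.inj heq
  exact ⟨q', hstep⟩

lemma kstar_rho_eq_some {q : Q} {n : N} (h : (kstar V).rho q = some n) : n = 1 := by
  simp only [kstar, Option.ite_none_right_eq_some, Option.some.injEq] at h
  exact h.2.symm

end kstar

theorem stmt13_general {A Ω Q₁ Q₂ : Type} (V : Transducer A Q₁ (List Ω × ℝ≥0))
    (F : FailTransducer Ω Q₂ ℝ≥0)
    (hlen : ∀ p a q β o, V.step p a = some (q, (β, o)) → β.length ≤ 1)
    (hmono : F.Monotonic) :
    (comp (kstar V) F).Monotonic := by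
  refine comp_monotonic (kstar V) F (fun q x hx => ?_) (fun p a q β o hstep => ?_) hmono
  · rw [kstar_rho_eq_some hx]
    rfl
  · obtain ⟨q', hstep'⟩ := kstar_step_eq_some hstep
    exact hlen p a q' β o hstep'

/-- the composition `V* ∘ F` of the Kleene star of `V` with a
monotonic failure transducer `F` is monotonic. -/
theorem stmt13 {A Ω Q₁ Q₂ : Type} (V : Transducer A Q₁ (List Ω × ℝ≥0))
    (F : FailTransducer Ω Q₂ ℝ≥0)
    (hpf : ∀ α γ, (V.Ofull α).isSome → (V.Ofull (α ++ γ)).isSome → γ = [])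
    (hnoin : ∀ p a, V.delta p a ≠ some V.start)
    (hnoout : ∀ q a, (V.rho q).isSome → V.delta q a = none)
    (hsnf : V.rho V.start = none)
    (hinit : V.init = 1)
    (hrho1 : ∀ q m, V.rho q = some m → m = 1)
    (hlen : ∀ p a q β o, V.step p a = some (q, (β, o)) → β.length ≤ 1)
    (hnc : F.NoFailCycles) (hmono : F.Monotonic) :
    (comp (kstar V) F).Monotonic :=
  stmt13_general V F hlen hmono
end

section
/- In the specialized composition W, for every state ⟨p₁,p₂⟩ with p₁ ∈ Q_ω^r for some ω with δ₂(p₂,ω) defined, if f₄(⟨p₁,p₂⟩) is defined in the generic composition V*∘F, then the sets of input symbols with defined transitions from ⟨p₁,p₂⟩ and from f₄(⟨p₁,p₂⟩) in V*∘F coincide: Sig(⟨p₁,p₂⟩) = Sig(f₄(⟨p₁,p₂⟩)). -/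
open scoped NNReal Computability
open Classical

section SpecializedComposition

open scoped NNReal
open Classical

noncomputable section

variable {A Ω Q₁ Q₂ : Type}

/-- Reachability via the generalized transition function. -/
def Reach {Q M : Type} [Monoid M] (V : Transducer A Q M) (p q : Q) : Prop :=
  ∃ α, V.dstar p α = some q

/-- `Δ_ω`: transitions of `V` whose output word is exactly `ω`. -/
def DeltaOm (V : Transducer A Q₁ (List Ω × ℝ≥0)) (ω : Ω) (p : Q₁) (a : A) (q : Q₁) : Prop :=
  ∃ o, V.step p a = some (q, ([ω], o))

/-- `Q_ω^l`: states from which the source of some `Δ_ω`-transition is reachable. -/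
def Ql (V : Transducer A Q₁ (List Ω × ℝ≥0)) (ω : Ω) : Set Q₁ :=
  {l | ∃ p a q, DeltaOm V ω p a q ∧ Reach V l p}

/-- `Q_ω^r`: states reachable from the target of some `Δ_ω`-transition. -/
def Qr (V : Transducer A Q₁ (List Ω × ℝ≥0)) (ω : Ω) : Set Q₁ :=
  {r | ∃ p a q, DeltaOm V ω p a q ∧ Reach V q r}

/-- `E` maps final states of `V` to the initial state and is the identity elsewhere. -/
def Efun (V : Transducer A Q₁ (List Ω × ℝ≥0)) (p : Q₁) : Q₁ :=
  if (V.rho p).isSome then V.start else p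

/-- The transition (and output) relation of the specialized composition `W`
(Definition 18). -/
def WdeltaRel (V : Transducer A Q₁ (List Ω × ℝ≥0)) (F : FailTransducer Ω Q₂ ℝ≥0)
    (s : Q₁ × Q₂) (a : A) (t : (Q₁ × Q₂) × ℝ≥0) : Prop :=
  (∃ ω q₂, F.delta s.2 ω = some q₂ ∧ s.1 ∈ Ql V ω ∧
    ∃ q₁ o₁, V.step s.1 a = some (q₁, ([], o₁)) ∧ q₁ ∈ Ql V ω ∧ t = ((q₁, s.2), o₁)) ∨
  (∃ ω q₂ q₁ o₁ o₂, F.step s.2 ω = some (q₂, o₂) ∧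
    V.step s.1 a = some (q₁, ([ω], o₁)) ∧ t = ((Efun V q₁, q₂), o₁ * o₂)) ∨
  (∃ ω l₂, F.delta l₂ ω = some s.2 ∧ s.1 ∈ Qr V ω ∧
    ∃ q₁ o₁, V.step s.1 a = some (q₁, ([], o₁)) ∧ q₁ ∈ Qr V ω ∧ t = ((Efun V q₁, s.2), o₁))

/-- The failure transition (and failure output) relation of `W`. -/
def WfailRel (V : Transducer A Q₁ (List Ω × ℝ≥0)) (F : FailTransducer Ω Q₂ ℝ≥0)
    (s : Q₁ × Q₂) (t : (Q₁ × Q₂) × ℝ≥0) : Prop :=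
  (∃ ω q₂, F.delta s.2 ω = some q₂ ∧ s.1 ∈ Ql V ω) ∧
  ∃ r₂ mf, F.failStep s.2 = some (r₂, mf) ∧ t = ((s.1, r₂), mf)

/-- The specialized composition `W` of `V*` and `F` (Definition 18). -/
def Wcomp (V : Transducer A Q₁ (List Ω × ℝ≥0)) (F : FailTransducer Ω Q₂ ℝ≥0) :
    FailTransducer A (Q₁ × Q₂) ℝ≥0 where
  start := (V.start, F.start)
  step := fun s a => if h : ∃ t, WdeltaRel V F s a t then some h.choose else none
  init := F.init
  rho := fun s => if s.1 = V.start then F.rho s.2 else none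
  failStep := fun s => if h : ∃ t, WfailRel V F s t then some h.choose else none

/-- The state set of the specialized composition `W`. -/
def WStates (V : Transducer A Q₁ (List Ω × ℝ≥0)) (F : FailTransducer Ω Q₂ ℝ≥0) :
    Set (Q₁ × Q₂) :=
  {s | ∃ p₂ ω q₂, F.delta p₂ ω = some q₂ ∧
    ((s.2 = p₂ ∧ s.1 ∈ Ql V ω) ∨ (s.2 = q₂ ∧ ∃ r ∈ Qr V ω, s.1 = Efun V r))}

end
end SpecializedComposition

/-! The outputs of `V` are single symbols, and every state of a trim `V` lies on an accepting
path. A state of `Q_ω^r` lies behind an `ω`-labelled transition on such a path, so any further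
output symbol would make the total output longer than one symbol. Hence all transitions
leaving `p₁` have empty output, and a transition of `V* ∘ F` from `⟨p₁, q⟩` then never consults
`F`: it exists iff `V` has a transition from `p₁`, whatever `q` is. -/

@[simp]
lemma listMonoid_mul_eq_append {Ω : Type} (x y : List Ω) : x * y = x ++ y := rfl

namespace Transducer

variable {A Q M : Type} [Monoid M]

def Run (T : Transducer A Q M) (q : Q) (α : List A) (q' : Q) (m : M) : Prop :=
  T.dstar q α = some q' ∧ T.lstar q α = some m

lemma Run.of_step {T : Transducer A Q M} {q q' : Q} {a : A} {m : M}
    (h : T.step q a = some (q', m)) : T.Run q [a] q' m := by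
  simp [Run, dstar, lstar, delta, h]

lemma Run.append {T : Transducer A Q M} {q q' q'' : Q} {α β : List A} {m m' : M}
    (h : T.Run q α q' m) (h' : T.Run q' β q'' m') : T.Run q (α ++ β) q'' (m * m') := by
  induction α generalizing q m with
  | nil =>
    obtain ⟨⟨⟩, ⟨⟩⟩ := h
    simpa using h'
  | cons a α ih =>
    obtain ⟨hd, hl⟩ := h
    simp only [dstar, delta, Option.bind_eq_some_iff, Option.map_eq_some_iff] at hd
    obtain ⟨_, ⟨x, hx, rfl⟩, hd⟩ := hd
    simp only [lstar, hx, Option.bind_some, Option.map_eq_some_iff] at hl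
    obtain ⟨m₁, hl, rfl⟩ := hl
    obtain ⟨hd', hl'⟩ := ih ⟨hd, hl⟩
    simp [Run, dstar, lstar, delta, hx, hd', hl', mul_assoc]

lemma exists_run_of_dstar_eq_some {T : Transducer A Q M} {q q' : Q} {α : List A}
    (h : T.dstar q α = some q') : ∃ m, T.Run q α q' m := by
  induction α generalizing q with
  | nil => exact ⟨1, h, rfl⟩
  | cons a α ih =>
    simp only [dstar, delta, Option.bind_eq_some_iff, Option.map_eq_some_iff] at h
    obtain ⟨_, ⟨x, hx, rfl⟩, hd⟩ := h
    obtain ⟨m, hrun⟩ := ih hd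
    exact ⟨_, (Run.of_step hx).append hrun⟩

lemma exists_run_of_O_isSome {T : Transducer A Q M} {q : Q} {α : List A}
    (h : (T.O q α).isSome) : ∃ f m r, T.Run q α f m ∧ T.rho f = some r := by
  obtain ⟨x, hx⟩ := Option.isSome_iff_exists.mp h
  simp only [O, Option.bind_eq_some_iff, Option.map_eq_some_iff] at hx
  obtain ⟨f, hd, m, hl, r, hr, -⟩ := hx
  exact ⟨f, m, r, ⟨hd, hl⟩, hr⟩

lemma Run.Ofull_eq {T : Transducer A Q M} {α : List A} {f : Q} {m r : M}
    (h : T.Run T.start α f m) (hr : T.rho f = some r) :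
    T.Ofull α = some (T.init * (m * r)) := by
  simp [Ofull, O, h.1, h.2, hr]

end Transducer

open Transducer in
lemma step_output_eq_nil_of_mem_Qr {A Ω Q₁ : Type} {V : Transducer A Q₁ (List Ω × ℝ≥0)}
    (hsingle : ∀ α x, V.Ofull α = some x → x.1.length ≤ 1)
    (hacc : ∀ q, ∃ α, V.dstar V.start α = some q)
    (hcoacc : ∀ q, ∃ α, (V.O q α).isSome)
    {ω : Ω} {p₁ q₁ : Q₁} (hp₁ : p₁ ∈ Qr V ω) {a : A} {β : List Ω} {o : ℝ≥0}
    (hstep : V.step p₁ a = some (q₁, (β, o))) : β = [] := by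
  obtain ⟨p, a₀, q, ⟨o₀, hΔ⟩, α₁, hqp₁⟩ := hp₁
  obtain ⟨m₀, hrun₀⟩ := exists_run_of_dstar_eq_some (hacc p).choose_spec
  obtain ⟨m₁, hrun₁⟩ := exists_run_of_dstar_eq_some hqp₁
  obtain ⟨f, m₂, r, hrun₂, hr⟩ := exists_run_of_O_isSome (hcoacc q₁).choose_spec
  have hrun := hrun₀.append <| (Run.of_step hΔ).append <|
    hrun₁.append <| (Run.of_step hstep).append hrun₂
  have hlen := hsingle _ _ (hrun.Ofull_eq hr)
  simp only [Prod.fst_mul, listMonoid_mul_eq_append, List.length_append,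
    List.length_singleton] at hlen
  exact List.eq_nil_of_length_eq_zero (by omega)

lemma comp_kstar_delta_isSome_iff {A Ω Q₁ Q₂ M : Type} [CommMonoid M]
    {V : Transducer A Q₁ (List Ω × M)} (F : FailTransducer Ω Q₂ M) {p₁ : Q₁} {a : A}
    (hnil : ∀ x, V.step p₁ a = some x → x.2.1 = []) (q : Q₂) :
    ((comp (kstar V) F).delta (p₁, q) a).isSome ↔ (V.step p₁ a).isSome := by
  simp only [Transducer.delta, comp, compStep, kstar, Option.isSome_map]
  cases hV : V.step p₁ a with
  | none => simp
  | some x =>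
    obtain ⟨q₁, β, o⟩ := x
    obtain rfl : β = [] := hnil _ hV
    simp

theorem stmt15_general {A Ω Q₁ Q₂ : Type} (V : Transducer A Q₁ (List Ω × ℝ≥0))
    (F : FailTransducer Ω Q₂ ℝ≥0)
    (hrange : {β | ∃ α x, V.Ofull α = some x ∧ x.1 = β} = {β | ∃ ω : Ω, β = [ω]})
    (htrim : ∀ q : Q₁, (∃ α, V.dstar V.start α = some q) ∧ ∃ α, (V.O q α).isSome)
    (p₁ : Q₁) (p₂ r₂ : Q₂) (ω : Ω)
    (hp₁ : p₁ ∈ Qr V ω) :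
    ∀ a : A, ((comp (kstar V) F).delta (p₁, p₂) a).isSome ↔
      ((comp (kstar V) F).delta (p₁, r₂) a).isSome := by
  intro a
  have hsingle : ∀ α x, V.Ofull α = some x → x.1.length ≤ 1 := by
    intro α x hx
    obtain ⟨ω', hω'⟩ : x.1 ∈ {β | ∃ ω : Ω, β = [ω]} := hrange ▸ ⟨α, x, hx, rfl⟩
    simp [hω']
  have hnil : ∀ x, V.step p₁ a = some x → x.2.1 = [] := fun _ hx =>
    step_output_eq_nil_of_mem_Qr hsingle (fun q => (htrim q).1) (fun q => (htrim q).2) hp₁ hx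
  rw [comp_kstar_delta_isSome_iff F hnil, comp_kstar_delta_isSome_iff F hnil]

/-- for a state `⟨p₁,p₂⟩` with `p₁ ∈ Q_ω^r` and `δ₂(p₂,ω)` defined,
if the failure transition of `⟨p₁,p₂⟩` in `V*∘F` is defined then the enabled input
symbols at `⟨p₁,p₂⟩` and at its failure successor coincide. -/
theorem stmt15 {A Ω Q₁ Q₂ : Type} (V : Transducer A Q₁ (List Ω × ℝ≥0))
    (F : FailTransducer Ω Q₂ ℝ≥0)
    (hpf : ∀ α γ, (V.Ofull α).isSome → (V.Ofull (α ++ γ)).isSome → γ = [])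
    (hnoin : ∀ p a, V.delta p a ≠ some V.start)
    (hnoout : ∀ q a, (V.rho q).isSome → V.delta q a = none)
    (hsnf : V.rho V.start = none)
    (hinit : V.init = 1)
    (hrho1 : ∀ q m, V.rho q = some m → m = 1)
    (hrange : {β | ∃ α x, V.Ofull α = some x ∧ x.1 = β} = {β | ∃ ω : Ω, β = [ω]})
    (htrim : ∀ q : Q₁, (∃ α, V.dstar V.start α = some q) ∧ ∃ α, (V.O q α).isSome)
    (hcond : CondProb V)
    (hnc : F.NoFailCycles) (hmono : F.Monotonic) (hprob : F.Probabilistic)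
    (hcoacc : ∀ q₂ : Q₂, ∃ α m, F.ORel q₂ α m)
    (p₁ : Q₁) (p₂ r₂ : Q₂) (ω : Ω)
    (hω : (F.delta p₂ ω).isSome) (hp₁ : p₁ ∈ Qr V ω)
    (hf : F.fail p₂ = some r₂) :
    ∀ a : A, ((comp (kstar V) F).delta (p₁, p₂) a).isSome ↔
      ((comp (kstar V) F).delta (p₁, r₂) a).isSome :=
  stmt15_general V F hrange htrim p₁ p₂ r₂ ω hp₁
end

section
/- With W and the pushed transducer W_C as above (weights pushed using the sums S(q) in the semiring ⟨ℝ₊,⊕,×,0,1⟩), W_C is canonical with respect to that semiring: for every state p, ⊕_{α ∈ Dom(O_{W_C}^p)} O_{W_C}^p(α) = 1. -/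
open scoped NNReal Computability
open Classical

/-!
Pushing weights along a nowhere-zero potential `V` multiplies the weight of every (completed)
transition `q → q'` by `V q' / V q` and every final weight at `q` by `(V q)⁻¹`. Along any
successful path from `p` the intermediate factors telescope, so every output from `p` is divided
by `V p`. With `V q` the total output mass from `q`, the outputs from each state then sum to `1`.
-/

namespace FailTransducer

variable {A Q M : Type}

section Determinism

variable [Monoid M] {T : FailTransducer A Q M}

theorem DF.unique {q : Q} {a : A} {q₁ q₂ : Q} {m₁ m₂ : M} (h₁ : DF T q a q₁ m₁)
    (h₂ : DF T q a q₂ m₂) : q₁ = q₂ ∧ m₁ = m₂ := by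
  induction h₁ generalizing q₂ m₂ with
  | base _ =>
    cases h₂ with
    | base _ => simp_all
    | fail _ _ _ => simp_all
  | fail _ hf _ ih =>
    cases h₂ with
    | base _ => simp_all
    | fail _ hf' hd' =>
      obtain ⟨rfl, rfl⟩ := Prod.ext_iff.1 (Option.some.inj (hf.symm.trans hf'))
      obtain ⟨rfl, rfl⟩ := ih hd'
      exact ⟨rfl, rfl⟩

theorem DFStar.unique {q : Q} {α : List A} {q₁ q₂ : Q} {m₁ m₂ : M}
    (h₁ : DFStar T q α q₁ m₁) (h₂ : DFStar T q α q₂ m₂) : q₁ = q₂ ∧ m₁ = m₂ := by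
  induction h₁ generalizing q₂ m₂ with
  | nil =>
    cases h₂
    exact ⟨rfl, rfl⟩
  | cons hd _ ih =>
    cases h₂ with
    | cons hd' ht' =>
      obtain ⟨rfl, rfl⟩ := hd.unique hd'
      obtain ⟨rfl, rfl⟩ := ih ht'
      exact ⟨rfl, rfl⟩

theorem ORel.unique {q : Q} {α : List A} {m₁ m₂ : M} (h₁ : T.ORel q α m₁)
    (h₂ : T.ORel q α m₂) : m₁ = m₂ := by
  obtain ⟨p, m, r, hd, hr, rfl⟩ := h₁
  obtain ⟨p', m', r', hd', hr', rfl⟩ := h₂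
  obtain ⟨rfl, rfl⟩ := hd.unique hd'
  rw [Option.some.inj (hr.symm.trans hr')]

theorem Ofun_eq_some_iff {q : Q} {α : List A} {m : M} :
    T.Ofun q α = some m ↔ T.ORel q α m := by
  unfold Ofun
  split_ifs with h
  · exact ⟨fun e => Option.some.inj e ▸ h.choose_spec,
      fun hm => congrArg some (h.choose_spec.unique hm)⟩
  · exact ⟨nofun, fun hm => (h ⟨m, hm⟩).elim⟩

end Determinism

section Push

variable [CommGroupWithZero M]

structure IsPush (T T' : FailTransducer A Q M) (V : Q → M) : Prop where
  step : ∀ p a, T'.step p a = (T.step p a).map fun x => (x.1, x.2 * V x.1 / V p)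
  failStep : ∀ p, T'.failStep p = (T.failStep p).map fun x => (x.1, x.2 * V x.1 / V p)
  rho : ∀ p, T'.rho p = (T.rho p).map fun r => r / V p

variable {T T' : FailTransducer A Q M} {V : Q → M}

theorem IsPush.symm (h : IsPush T T' V) (hV : ∀ q, V q ≠ 0) :
    IsPush T' T fun q => (V q)⁻¹ where
  step p a := by
    rw [h.step]
    rcases T.step p a with _ | ⟨q, m⟩ <;> simp; field_simp [hV]
  failStep p := by
    rw [h.failStep]
    rcases T.failStep p with _ | ⟨q, m⟩ <;> simp; field_simp [hV]
  rho p := by rw [h.rho]; cases T.rho p <;> simp [hV]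

theorem IsPush.DF (h : IsPush T T' V) (hV : ∀ q, V q ≠ 0) {q : Q} {a : A} {q' : Q} {m : M}
    (hd : DF T q a q' m) : DF T' q a q' (m * V q' / V q) := by
  induction hd with
  | base hs => exact .base (by rw [h.step, hs]; rfl)
  | @fail q a p mf q' m hn hf _ ih =>
    have hd' := DF.fail (by rw [h.step, hn]; rfl) (by rw [h.failStep, hf]; rfl) ih
    convert hd' using 1
    field_simp [hV]

theorem IsPush.DFStar (h : IsPush T T' V) (hV : ∀ q, V q ≠ 0) {q : Q} {α : List A} {q' : Q}
    {m : M} (hd : DFStar T q α q' m) : DFStar T' q α q' (m * V q' / V q) := by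
  induction hd with
  | nil => simpa [hV] using DFStar.nil
  | @cons q a w q₁ m₁ q' m₂ hd _ ih =>
    convert DFStar.cons (h.DF hV hd) ih using 1
    field_simp [hV]

theorem IsPush.ORel (h : IsPush T T' V) (hV : ∀ q, V q ≠ 0) {q : Q} {α : List A} {m : M}
    (hm : T.ORel q α m) : T'.ORel q α (m / V q) := by
  obtain ⟨p, m, r, hd, hr, rfl⟩ := hm
  refine ⟨p, m * V p / V q, r / V p, h.DFStar hV hd, by rw [h.rho, hr]; rfl, ?_⟩
  field_simp [hV]

theorem IsPush.Ofun_eq (h : IsPush T T' V) (hV : ∀ q, V q ≠ 0) (q : Q) (α : List A) :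
    T'.Ofun q α = (T.Ofun q α).map (· / V q) := by
  refine Option.ext fun m => ?_
  simp only [Option.map_eq_some_iff, Ofun_eq_some_iff]
  constructor
  · intro hm
    refine ⟨m * V q, ?_, by field_simp [hV]⟩
    simpa using (h.symm hV).ORel (fun q => inv_ne_zero (hV q)) hm
  · rintro ⟨m₀, hm₀, rfl⟩
    exact h.ORel hV hm₀

end Push

end FailTransducer

theorem stmt18_general {A Q : Type}
    (W WC : FailTransducer A Q ℝ≥0)
    (Sv : Q → ℝ≥0)
    (hS : ∀ q, Sv q = ∑' α : List A, ((W.Ofun q α).getD 0))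
    (hSpos : ∀ q, 0 < Sv q)
    (hstep : ∀ p a, WC.step p a = (W.step p a).map fun x => (x.1, x.2 * Sv x.1 / Sv p))
    (hfailStep : ∀ p, WC.failStep p = (W.failStep p).map fun x => (x.1, x.2 * Sv x.1 / Sv p))
    (hrho : ∀ p, WC.rho p = (W.rho p).map fun r => r / Sv p) :
    ∀ p : Q, ∑' α : List A, ((WC.Ofun p α).getD 0) = 1 := by
  intro p
  have hSne : ∀ q, Sv q ≠ 0 := fun q => (hSpos q).ne'
  have hpush : W.IsPush WC Sv := ⟨hstep, hfailStep, hrho⟩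
  calc ∑' α : List A, ((WC.Ofun p α).getD 0)
      = ∑' α : List A, ((W.Ofun p α).getD 0) / Sv p := by
        refine tsum_congr fun α => ?_
        simpa [hpush.Ofun_eq hSne] using Option.getD_map (· / Sv p) 0 (W.Ofun p α)
    _ = 1 := by rw [tsum_div_const, ← hS, div_self (hSne p)]

/-- the pushed transducer `W_C` is canonical: at every state the
outputs sum to `1`. -/
theorem stmt18 {A Q : Type} [Fintype A] [Fintype Q]
    (W WC : FailTransducer A Q ℝ≥0)
    (hmono : W.Monotonic) (hprob : W.Probabilistic) (hnc : W.NoFailCycles)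
    (Sv : Q → ℝ≥0)
    (hS : ∀ q, Sv q = ∑' α : List A, ((W.Ofun q α).getD 0))
    (hSpos : ∀ q, 0 < Sv q)
    (hstep : ∀ p a, WC.step p a = (W.step p a).map fun x => (x.1, x.2 * Sv x.1 / Sv p))
    (hfailStep : ∀ p, WC.failStep p = (W.failStep p).map fun x => (x.1, x.2 * Sv x.1 / Sv p))
    (hrho : ∀ p, WC.rho p = (W.rho p).map fun r => r / Sv p)
    (hinit : WC.init = W.init * Sv W.start)
    (hstart : WC.start = W.start) :
    ∀ p : Q, ∑' α : List A, ((WC.Ofun p α).getD 0) = 1 :=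
  stmt18_general W WC Sv hS hSpos hstep hfailStep hrho
end
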